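/- arXiv:1601.07770 — 2 statements merged into one kernel-verified Lean document; each statement's English description precedes it below -/
import Mathlib

section
/- The function T(z) = (-1 + sqrt((1+c·T_a)² + 2c·τ(z)))/c with τ(z) as defined satisfies the flux boundary condition [k₀(1+cT(z))·dT/dz] evaluated at z = ℓ/2 equals -q. -/
/-!
Since `1 + c T = √((1 + c Tₐ)² + 2 c τ)`, the chain rule gives `(1 + c T) T' = τ'`
(this is the Kirchhoff transform `T + c T²/2 = Tₐ + c Tₐ²/2 + τ` read backwards),
and `τ'(ℓ/2) = -q/k₀` because the quadratic part of `τ` is stationary at `z = ℓ/2`.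
-/

open Real

theorem one_add_mul_mul_deriv_of_eq_sqrt {T τ : ℝ → ℝ} {A c τ' x : ℝ} (hc : c ≠ 0)
    (hT : ∀ z, T z = (-1 + √(A + 2 * c * τ z)) / c) (hτ : HasDerivAt τ τ' x)
    (hpos : 0 < A + 2 * c * τ x) :
    (1 + c * T x) * deriv T x = τ' := by
  have hroot : 1 + c * T x = √(A + 2 * c * τ x) := by
    rw [hT x]
    field_simp
    ring
  have hsqrt : HasDerivAt (fun z => √(A + 2 * c * τ z)) (2 * c * τ' / (2 * √(A + 2 * c * τ x))) x :=
    ((hτ.const_mul (2 * c)).const_add A).sqrt hpos.ne'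
  have hderiv : HasDerivAt T (2 * c * τ' / (2 * √(A + 2 * c * τ x)) / c) x := by
    rw [funext hT]
    exact (hsqrt.const_add (-1)).div_const c
  have hroot_pos : 0 < √(A + 2 * c * τ x) := sqrt_pos.mpr hpos
  rw [hderiv.deriv, hroot]
  field_simp

theorem hasDerivAt_quadratic_source (Q q k₀ ℓ z : ℝ) :
    HasDerivAt (fun z => Q / (2 * k₀) * (3 * ℓ ^ 2 / 4 + z * ℓ - z ^ 2) - q / k₀ * (z + ℓ / 2))
      (Q / (2 * k₀) * (ℓ - 2 * z) - q / k₀) z := by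
  have h := ((((hasDerivAt_id z).mul_const ℓ).const_add (3 * ℓ ^ 2 / 4)).sub
    (hasDerivAt_pow 2 z)).const_mul (Q / (2 * k₀)) |>.sub
    (((hasDerivAt_id z).add_const (ℓ / 2)).const_mul (q / k₀))
  exact h.congr_deriv (by norm_num)

theorem stmt2_general (ℓ k₀ c Q q Ta : ℝ) (hℓ : 0 < ℓ) (hk : 0 < k₀) (hc : 0 < c)
    (τ : ℝ → ℝ)
    (hτ : ∀ z, τ z = Q / (2 * k₀) * (3 * ℓ ^ 2 / 4 + z * ℓ - z ^ 2) - q / k₀ * (z + ℓ / 2))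
    (T : ℝ → ℝ)
    (hT : ∀ z, T z = (-1 + Real.sqrt ((1 + c * Ta) ^ 2 + 2 * c * τ z)) / c)
    (hpos : ∀ z ∈ Set.Icc (-ℓ/2) (ℓ/2), 0 < (1 + c * Ta) ^ 2 + 2 * c * τ z) :
    k₀ * (1 + c * T (ℓ/2)) * deriv T (ℓ/2) = -q := by
  have hτ' : HasDerivAt τ (-q / k₀) (ℓ / 2) := by
    rw [funext hτ]
    convert hasDerivAt_quadratic_source Q q k₀ ℓ (ℓ / 2) using 1
    ring
  have hend : ℓ / 2 ∈ Set.Icc (-ℓ/2) (ℓ/2) := ⟨by linarith, le_rfl⟩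
  rw [mul_assoc, one_add_mul_mul_deriv_of_eq_sqrt hc.ne' hT hτ' (hpos _ hend)]
  field_simp

/-- The flux boundary condition `[k₀(1+cT(z))·dT/dz]_{z=ℓ/2} = -q`. -/
theorem stmt2 (ℓ k₀ c Q q Ta : ℝ) (hℓ : 0 < ℓ) (hk : 0 < k₀) (hc : 0 < c)
    (hQ : 0 < Q) (hq : 0 < q) (hTa : 0 < Ta)
    (τ : ℝ → ℝ)
    (hτ : ∀ z, τ z = Q / (2 * k₀) * (3 * ℓ ^ 2 / 4 + z * ℓ - z ^ 2) - q / k₀ * (z + ℓ / 2))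
    (T : ℝ → ℝ)
    (hT : ∀ z, T z = (-1 + Real.sqrt ((1 + c * Ta) ^ 2 + 2 * c * τ z)) / c)
    (hpos : ∀ z ∈ Set.Icc (-ℓ/2) (ℓ/2), 0 < (1 + c * Ta) ^ 2 + 2 * c * τ z) :
    k₀ * (1 + c * T (ℓ/2)) * deriv T (ℓ/2) = -q :=
  stmt2_general ℓ k₀ c Q q Ta hℓ hk hc τ hτ T hT hpos
end

section
/- The partial derivative of T(z_r) with respect to k₀ equals -τ(z_r)/(k₀(1 + cT(z_r))), where τ(z_r) = (Q/(2k₀))·(3ℓ²/4 + z_rℓ - z_r²) - (q/k₀)·(z_r + ℓ/2) depends on k₀ as 1/k₀ times a k₀-independent quantity. -/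
theorem hasDerivAt_sqrt_add_div {a b x : ℝ} (hx : x ≠ 0) (h : a + b / x ≠ 0) :
    HasDerivAt (fun y => √(a + b / y)) (-(b / x) / (2 * x * √(a + b / x))) x := by
  have hinv : HasDerivAt (fun y => a + b / y) (-(b / x) / x) x := by
    simpa [div_eq_mul_inv, neg_div, mul_assoc, ← sq] using
      ((hasDerivAt_inv hx).const_mul b).const_add a
  refine (hinv.sqrt h).congr_deriv ?_
  field_simp

theorem stmt11_general (k₀ c Ta : ℝ) (hk : 0 < k₀) (hc : 0 < c)
    (A : ℝ) (τr : ℝ) (hτ : τr = A / k₀)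
    (hpos : 0 < (1 + c * Ta) ^ 2 + 2 * c * τr)
    (Tr : ℝ) (hT : Tr = (-1 + Real.sqrt ((1 + c * Ta) ^ 2 + 2 * c * τr)) / c) :
    HasDerivAt
      (fun k : ℝ => (-1 + Real.sqrt ((1 + c * Ta) ^ 2 + 2 * c * (A / k))) / c)
      (-τr / (k₀ * (1 + c * Tr))) k₀ := by
  have hroot : 1 + c * Tr = √((1 + c * Ta) ^ 2 + 2 * c * τr) := by
    rw [hT]; field_simp; ring
  have hsqrt := hasDerivAt_sqrt_add_div (a := (1 + c * Ta) ^ 2) (b := 2 * c * A) hk.ne'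
    (by rw [mul_div_assoc, ← hτ]; exact hpos.ne')
  simp only [mul_div_assoc, ← hτ] at hsqrt
  refine ((hsqrt.const_add (-1)).div_const c).congr_deriv ?_
  rw [hroot]
  field_simp

/-- `∂T(z_r)/∂k₀ = -τ(z_r)/(k₀(1 + cT(z_r)))`, where `τ(z_r) = A/k₀` with `A`
independent of `k₀`. -/
theorem stmt11 (ℓ k₀ c Q q Ta zr : ℝ) (hℓ : 0 < ℓ) (hk : 0 < k₀) (hc : 0 < c)
    (hQ : 0 < Q) (hq : 0 < q) (hTa : 0 < Ta)
    (A : ℝ) (hA : A = Q / 2 * (3 * ℓ ^ 2 / 4 + zr * ℓ - zr ^ 2) - q * (zr + ℓ / 2))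
    (τr : ℝ) (hτ : τr = A / k₀)
    (hpos : 0 < (1 + c * Ta) ^ 2 + 2 * c * τr)
    (Tr : ℝ) (hT : Tr = (-1 + Real.sqrt ((1 + c * Ta) ^ 2 + 2 * c * τr)) / c) :
    HasDerivAt
      (fun k : ℝ => (-1 + Real.sqrt ((1 + c * Ta) ^ 2 + 2 * c * (A / k))) / c)
      (-τr / (k₀ * (1 + c * Tr))) k₀ :=
  stmt11_general k₀ c Ta hk hc A τr hτ hpos Tr hT
end
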